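/- Fix c ∈ (−1,1) and let G(t) = h((1+c)/2) − (1/2)·h((1+c+t)/2) − (1/2)·h((1+c−t)/2) for t ∈ [−(1−|c|), 1−|c|]. Then G attains its maximum over this interval at the endpoints t = ±(1−|c|), and the maximum value equals h((1+c)/2) − (1/2)·h(|c|). -/

import Mathlib

/-- Binary entropy in bits (with `h 0 = h 1 = 0` since `logb 2 0 = 0`). -/
noncomputable def binEnt (p : ℝ) : ℝ := -(p * Real.logb 2 p) - (1 - p) * Real.logb 2 (1 - p)

/-!
Writing `φ t = h ((1 + c + t) / 2) + h ((1 + c - t) / 2)`, we have `G t = h ((1 + c) / 2) - φ t / 2`.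
As a sum of concave functions of `t`, `φ` is concave on `[-(1 - |c|), 1 - |c|]`, so its minimum
there is attained at an endpoint. At either endpoint one of the two arguments is `0` or `1` and the
other is `|c|` or `1 - |c|`, so by the symmetry of `h` both endpoint values equal `h |c|`.
-/

open Set

lemma binEnt_eq_binEntropy_div (p : ℝ) : binEnt p = Real.binEntropy p / Real.log 2 := by
  simp only [binEnt, Real.binEntropy, Real.logb, Real.log_inv]
  ring

lemma binEnt_one : binEnt 1 = 0 := by simp [binEnt_eq_binEntropy_div]

lemma binEnt_one_sub (p : ℝ) : binEnt (1 - p) = binEnt p := by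
  simp [binEnt_eq_binEntropy_div]

lemma concaveOn_binEnt : ConcaveOn ℝ (Icc 0 1) binEnt := by
  have hsmul : binEnt = fun p => (Real.log 2)⁻¹ • Real.binEntropy p := by
    funext p
    rw [binEnt_eq_binEntropy_div, smul_eq_mul, div_eq_inv_mul]
  rw [hsmul]
  exact Real.strictConcave_binEntropy.concaveOn.smul (by positivity)

lemma ConcaveOn.comp_add_mul {f : ℝ → ℝ} {s : Set ℝ} (hf : ConcaveOn ℝ s f) (a b : ℝ) :
    ConcaveOn ℝ {t | a + b * t ∈ s} (fun t => f (a + b * t)) := by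
  have hline : ∀ t, AffineMap.lineMap a (a + b) t = a + b * t := fun t => by
    rw [AffineMap.lineMap_apply_ring']
    ring
  simpa only [Set.preimage, Function.comp_def, hline] using
    hf.comp_affineMap (AffineMap.lineMap a (a + b))

section Reflection

variable {f : ℝ → ℝ}

lemma ConcaveOn.add_reflect (hf : ConcaveOn ℝ (Icc 0 1) f) (c : ℝ) :
    ConcaveOn ℝ (Icc (-(1 - |c|)) (1 - |c|))
      (fun t => f ((1 + c + t) / 2) + f ((1 + c - t) / 2)) := by
  have hmem : ∀ t ∈ Icc (-(1 - |c|)) (1 - |c|),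
      (1 + c + t) / 2 ∈ Icc (0 : ℝ) 1 ∧ (1 + c - t) / 2 ∈ Icc (0 : ℝ) 1 := by
    rintro t ⟨hlo, hhi⟩
    have := neg_abs_le c
    have := le_abs_self c
    refine ⟨⟨?_, ?_⟩, ⟨?_, ?_⟩⟩ <;> linarith
  have hplus := hf.comp_add_mul ((1 + c) / 2) (1 / 2)
  have hminus := hf.comp_add_mul ((1 + c) / 2) (-(1 / 2))
  have hplus_eq : ∀ t : ℝ, (1 + c) / 2 + 1 / 2 * t = (1 + c + t) / 2 := fun t => by ring
  have hminus_eq : ∀ t : ℝ, (1 + c) / 2 + -(1 / 2) * t = (1 + c - t) / 2 := fun t => by ring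
  simp only [hplus_eq, hminus_eq] at hplus hminus
  exact (hplus.subset (fun t ht => (hmem t ht).1) (convex_Icc _ _)).add
    (hminus.subset (fun t ht => (hmem t ht).2) (convex_Icc _ _))

lemma add_reflect_at_right_endpoint (hsymm : ∀ p, f (1 - p) = f p) (c : ℝ) :
    f ((1 + c + (1 - |c|)) / 2) + f ((1 + c - (1 - |c|)) / 2) = f |c| + f 1 := by
  rcases abs_cases c with ⟨habs, -⟩ | ⟨habs, -⟩
  · rw [habs, show (1 + c + (1 - c)) / 2 = 1 by ring, show (1 + c - (1 - c)) / 2 = c by ring]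
    ring
  · rw [habs, show (1 + c + (1 - -c)) / 2 = 1 - -c by ring,
      show (1 + c - (1 - -c)) / 2 = 1 - 1 by ring, hsymm, hsymm]

lemma add_reflect_at_left_endpoint (hsymm : ∀ p, f (1 - p) = f p) (c : ℝ) :
    f ((1 + c + -(1 - |c|)) / 2) + f ((1 + c - -(1 - |c|)) / 2) = f |c| + f 1 := by
  rw [← add_reflect_at_right_endpoint hsymm c, add_comm]
  ring_nf

end Reflection

theorem mi_max_at_endpoints_general (c : ℝ)
    (G : ℝ → ℝ)
    (hG : G = fun t => binEnt ((1 + c) / 2) - (1 / 2) * binEnt ((1 + c + t) / 2)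
      - (1 / 2) * binEnt ((1 + c - t) / 2)) :
    (∀ t ∈ Set.Icc (-(1 - |c|)) (1 - |c|),
        G t ≤ binEnt ((1 + c) / 2) - (1 / 2) * binEnt |c|) ∧
    G (1 - |c|) = binEnt ((1 + c) / 2) - (1 / 2) * binEnt |c| ∧
    G (-(1 - |c|)) = binEnt ((1 + c) / 2) - (1 / 2) * binEnt |c| := by
  subst hG
  have hright := add_reflect_at_right_endpoint binEnt_one_sub c
  have hleft := add_reflect_at_left_endpoint binEnt_one_sub c
  rw [binEnt_one, add_zero] at hright hleft
  refine ⟨fun t ht => ?_, by linarith, by linarith⟩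
  have hle : -(1 - |c|) ≤ 1 - |c| := ht.1.trans ht.2
  have hmin := (concaveOn_binEnt.add_reflect c).min_le_of_mem_Icc
    ⟨le_rfl, hle⟩ ⟨hle, le_rfl⟩ ht
  simp only [hleft, hright, min_self] at hmin
  linarith

/-- The mutual information `G(t)` attains its maximum at the endpoints
`t = ±(1 - |c|)`, with maximum value `h((1+c)/2) - (1/2)·h(|c|)`. -/
theorem mi_max_at_endpoints (c : ℝ) (hc : c ∈ Set.Ioo (-1 : ℝ) 1)
    (G : ℝ → ℝ)
    (hG : G = fun t => binEnt ((1 + c) / 2) - (1 / 2) * binEnt ((1 + c + t) / 2)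
      - (1 / 2) * binEnt ((1 + c - t) / 2)) :
    (∀ t ∈ Set.Icc (-(1 - |c|)) (1 - |c|),
        G t ≤ binEnt ((1 + c) / 2) - (1 / 2) * binEnt |c|) ∧
    G (1 - |c|) = binEnt ((1 + c) / 2) - (1 / 2) * binEnt |c| ∧
    G (-(1 - |c|)) = binEnt ((1 + c) / 2) - (1 / 2) * binEnt |c| :=
  mi_max_at_endpoints_general c G hG
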